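/- In the m × m lattice graph with m ≥ 4 and any interior vertex x₀, the KCN-neighborhood N^K_6(x₀) (a proper subgraph covering all cycles through x₀ of length ≤ 6) is not equal to N^W_ℓ(x₀) for any ℓ ≥ 0: the family of WZPZ-neighborhoods of x₀ jumps from a small set (for ℓ ≤ 3) directly to the full lattice (for ℓ ≥ 4), skipping N^K_6(x₀). -/
import Mathlib


/-- The KCN `ℓ`-neighborhood of a vertex `i` (vertex part): `i`, its nearest neighbors,
and all vertices on paths of length `≤ ℓ − 2` connecting two nearest neighbors of `i`. -/
def kcnVerts {V : Type} (G : SimpleGraph V) (ℓ : ℕ) (i : V) : Set V :=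
  {i} ∪ G.neighborSet i ∪
    {v | ∃ a b, G.Adj i a ∧ G.Adj i b ∧ a ≠ b ∧
      ∃ p : G.Walk a b, p.IsPath ∧ p.length ≤ ℓ - 2 ∧ v ∈ p.support}

/-- The KCN `ℓ`-neighborhood of a vertex `i` (edge part): the edges incident to `i`,
and all edges on paths of length `≤ ℓ − 2` connecting two nearest neighbors of `i`. -/
def kcnEdges {V : Type} (G : SimpleGraph V) (ℓ : ℕ) (i : V) : Set (Sym2 V) :=
  {e | ∃ a, G.Adj i a ∧ e = s(i, a)} ∪
    {e | ∃ a b, G.Adj i a ∧ G.Adj i b ∧ a ≠ b ∧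
      ∃ p : G.Walk a b, p.IsPath ∧ p.length ≤ ℓ - 2 ∧ e ∈ p.edges}

/-- The boundary of a subgraph, given as a pair (vertex set, edge set): vertices of the
subgraph incident to an edge of `G` not in the subgraph. -/
def wBdry {V : Type} (G : SimpleGraph V) (P : Set V × Set (Sym2 V)) : Set V :=
  {v | v ∈ P.1 ∧ ∃ w, G.Adj v w ∧ s(v, w) ∉ P.2}

/-- One step of the WZPZ construction at level `s`: add all vertices and edges lying on
paths of length `≤ s`, with all edges outside the current subgraph, connecting two
boundary vertices of the current subgraph. -/
def wAdd {V : Type} (G : SimpleGraph V) (s : ℕ) (P : Set V × Set (Sym2 V)) :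
    Set V × Set (Sym2 V) :=
  (P.1 ∪ {v | ∃ a ∈ wBdry G P, ∃ b ∈ wBdry G P, ∃ p : G.Walk a b,
      p.IsPath ∧ p.length ≤ s ∧ (∀ e ∈ p.edges, e ∉ P.2) ∧ v ∈ p.support},
   P.2 ∪ {e | ∃ a ∈ wBdry G P, ∃ b ∈ wBdry G P, ∃ p : G.Walk a b,
      p.IsPath ∧ p.length ≤ s ∧ (∀ e' ∈ p.edges, e' ∉ P.2) ∧ e ∈ p.edges})

/-- Saturation at level `s`: iterate `wAdd` until nothing more can be added (on a finite
graph, iterating more times than there are vertices plus possible edges suffices). -/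
def wSat {V : Type} [Fintype V] (G : SimpleGraph V) (s : ℕ)
    (P : Set V × Set (Sym2 V)) : Set V × Set (Sym2 V) :=
  (wAdd G s)^[Fintype.card V * Fintype.card V + Fintype.card V + 1] P

/-- The number of saturation iterations actually needed at level `s` starting from `P`
(the least `k` after which `wAdd` is stationary). -/
noncomputable def wSatCount {V : Type} (G : SimpleGraph V) (s : ℕ)
    (P : Set V × Set (Sym2 V)) : ℕ :=
  sInf {k | (wAdd G s)^[k + 1] P = (wAdd G s)^[k] P}

/-- The starting subgraph of the WZPZ construction: `x₀`, its neighbors and the edges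
joining `x₀` to them. -/
def wzpzBase {V : Type} (G : SimpleGraph V) (x₀ : V) : Set V × Set (Sym2 V) :=
  ({x₀} ∪ G.neighborSet x₀, {e | ∃ a, G.Adj x₀ a ∧ e = s(x₀, a)})

/-- The WZPZ `ℓ`-neighborhood of `x₀`: starting from `x₀` with its incident edges and
neighbors, for each `s = 1, …, ℓ` in increasing order repeatedly add all vertices and
edges on outside paths of length `≤ s` between boundary vertices, until saturation. -/
def wzpz {V : Type} [Fintype V] (G : SimpleGraph V) (x₀ : V) : ℕ → Set V × Set (Sym2 V)
  | 0 => wzpzBase G x₀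
  | (s + 1) => wSat G (s + 1) (wzpz G x₀ s)

/-- Every cycle of `G` has length at most `ℓ₀`. -/
def cyclesBounded {V : Type} (G : SimpleGraph V) (ℓ₀ : ℕ) : Prop :=
  ∀ (v : V) (c : G.Walk v v), c.IsCycle → c.length ≤ ℓ₀

/-- The `m × m` lattice graph: vertices `Fin m × Fin m`, with edges between vertices at
Manhattan distance 1. -/
def latticeGraph (m : ℕ) : SimpleGraph (Fin m × Fin m) :=
  SimpleGraph.fromRel (fun a b =>
    (a.1 = b.1 ∧ a.2.val + 1 = b.2.val) ∨ (a.2 = b.2 ∧ a.1.val + 1 = b.1.val))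

lemma lat_adj {m : ℕ} (u v : Fin m × Fin m) : (latticeGraph m).Adj u v ↔
    (u.1.val = v.1.val ∧ (u.2.val + 1 = v.2.val ∨ v.2.val + 1 = u.2.val)) ∨
    (u.2.val = v.2.val ∧ (u.1.val + 1 = v.1.val ∨ v.1.val + 1 = u.1.val)) := by
  simp only [latticeGraph, SimpleGraph.fromRel_adj, ne_eq, Prod.ext_iff, Fin.ext_iff, not_and]
  constructor
  · rintro ⟨h, h2⟩; omega
  · intro h; omega
def man {m : ℕ} (u v : Fin m × Fin m) : ℕ :=
  (u.1.val - v.1.val) + (v.1.val - u.1.val) + ((u.2.val - v.2.val) + (v.2.val - u.2.val))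
lemma man_le_length {m : ℕ} {u v : Fin m × Fin m} (p : (latticeGraph m).Walk u v) :
    man u v ≤ p.length := by
  induction p with
  | nil => simp [man]
  | @cons a b c h p ih =>
    rw [lat_adj] at h
    simp only [SimpleGraph.Walk.length_cons]
    unfold man at *
    omega
lemma man_adj {m : ℕ} {u v : Fin m × Fin m} (h : (latticeGraph m).Adj u v) :
    man u v = 1 := by rw [lat_adj] at h; unfold man; omega
lemma support_bound {m : ℕ} {x₀ a b v : Fin m × Fin m}
    (ha : (latticeGraph m).Adj x₀ a) (hb : (latticeGraph m).Adj x₀ b)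
    (p : (latticeGraph m).Walk a b) (hl : p.length ≤ 4) (hv : v ∈ p.support) :
    man x₀ v ≤ 3 := by
  classical
  have h1 : man a v ≤ (p.takeUntil v hv).length := man_le_length _
  have h2 : man v b ≤ (p.dropUntil v hv).length := man_le_length _
  have h3 : (p.takeUntil v hv).length + (p.dropUntil v hv).length = p.length := by
    conv_rhs => rw [← p.take_spec hv]
    rw [SimpleGraph.Walk.length_append]
  have := man_adj ha
  have := man_adj hb
  have t1 : man x₀ v ≤ man x₀ a + man a v := by unfold man; omega
  have t2 : man x₀ v ≤ man x₀ b + man v b := by unfold man; omega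
  omega
lemma kcn_vert_bound {m : ℕ} {x₀ v : Fin m × Fin m}
    (h : v ∈ kcnVerts (latticeGraph m) 6 x₀) : man x₀ v ≤ 3 := by
  rcases h with (h | h) | ⟨a, b, ha, hb, _, p, _, hl, hv⟩
  · simp only [Set.mem_singleton_iff] at h; subst h; unfold man; omega
  · have := man_adj ((SimpleGraph.mem_neighborSet _ _ _).mp h); omega
  · exact support_bound ha hb p (by omega) hv
lemma kcn_edge_bound {m : ℕ} {x₀ u w : Fin m × Fin m}
    (h : s(u, w) ∈ kcnEdges (latticeGraph m) 6 x₀) : man x₀ w ≤ 3 := by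
  rcases h with ⟨a, ha, he⟩ | ⟨a, b, ha, hb, _, p, _, hl, he⟩
  · rw [Sym2.eq_iff] at he
    rcases he with ⟨_, rfl⟩ | ⟨_, rfl⟩
    · have := man_adj ha; omega
    · unfold man; omega
  · exact support_bound ha hb p (by omega) (SimpleGraph.Walk.snd_mem_support_of_mem_edges p he)
lemma wAdd_fst_subset {V : Type} (G : SimpleGraph V) (s : ℕ) (P : Set V × Set (Sym2 V)) :
    P.1 ⊆ (wAdd G s P).1 := Set.subset_union_left
lemma wAdd_snd_subset {V : Type} (G : SimpleGraph V) (s : ℕ) (P : Set V × Set (Sym2 V)) :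
    P.2 ⊆ (wAdd G s P).2 := Set.subset_union_left
lemma wSat_fixed {V : Type} [Fintype V] (G : SimpleGraph V) (s : ℕ)
    (P : Set V × Set (Sym2 V)) : wAdd G s (wSat G s P) = wSat G s P := by
  classical
  set f := wAdd G s with hf
  set n := Fintype.card V with hn
  set N := n * n + n + 1 with hN
  have stab : ∀ k, f (f^[k] P) = f^[k] P → ∀ j, k ≤ j → f^[j] P = f^[k] P := by
    intro k hk j hj
    induction j with
    | zero => obtain rfl : k = 0 := by omega
              rfl
    | succ j ih =>
      rcases Nat.eq_or_lt_of_le hj with h | h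
      · rw [← h]
      · have hj' : k ≤ j := by omega
        rw [Function.iterate_succ_apply', ih hj', hk]
  -- either some fixed point below N, or cardinalities grow
  by_cases hex : ∃ k < N, f (f^[k] P) = f^[k] P
  · obtain ⟨k, hk, hfix⟩ := hex
    have h1 : f^[N] P = f^[k] P := stab k hfix N (by omega)
    show f (f^[N] P) = f^[N] P
    rw [h1, hfix]
  · push_neg at hex
    exfalso
    set g : ℕ → ℕ := fun k => ((f^[k] P).1.ncard + (f^[k] P).2.ncard) with hg
    have grow : ∀ k < N, g k < g (k + 1) := by
      intro k hk
      have hne : f^[k+1] P ≠ f^[k] P := by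
        rw [Function.iterate_succ_apply']; exact hex k hk
      have h1 : (f^[k] P).1 ⊆ (f^[k+1] P).1 := by
        rw [Function.iterate_succ_apply']; exact wAdd_fst_subset G s _
      have h2 : (f^[k] P).2 ⊆ (f^[k+1] P).2 := by
        rw [Function.iterate_succ_apply']; exact wAdd_snd_subset G s _
      have hc1 : (f^[k] P).1.ncard ≤ (f^[k+1] P).1.ncard :=
        Set.ncard_le_ncard h1 (Set.toFinite _)
      have hc2 : (f^[k] P).2.ncard ≤ (f^[k+1] P).2.ncard :=
        Set.ncard_le_ncard h2 (Set.toFinite _)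
      have : (f^[k] P).1 ≠ (f^[k+1] P).1 ∨ (f^[k] P).2 ≠ (f^[k+1] P).2 := by
        by_contra hcon
        push_neg at hcon
        exact hne (Prod.ext hcon.1.symm hcon.2.symm)
      rcases this with h | h
      · have : (f^[k] P).1 ⊂ (f^[k+1] P).1 := ⟨h1, fun hle => h (Set.Subset.antisymm h1 hle)⟩
        have := Set.ncard_lt_ncard this (Set.toFinite _)
        simp only [hg]; omega
      · have : (f^[k] P).2 ⊂ (f^[k+1] P).2 := ⟨h2, fun hle => h (Set.Subset.antisymm h2 hle)⟩
        have := Set.ncard_lt_ncard this (Set.toFinite _)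
        simp only [hg]; omega
    have glow : ∀ k ≤ N, k ≤ g k := by
      intro k hk
      induction k with
      | zero => omega
      | succ k ih =>
        have := grow k (by omega)
        have := ih (by omega)
        omega
    have hb1 : (f^[N] P).1.ncard ≤ n := by
      have := Set.ncard_le_ncard (Set.subset_univ (f^[N] P).1) (Set.toFinite _)
      rwa [Set.ncard_univ, Nat.card_eq_fintype_card] at this
    have hb2 : (f^[N] P).2.ncard ≤ n * n := by
      have h := Set.ncard_le_ncard (Set.subset_univ (f^[N] P).2) (Set.toFinite _)
      rw [Set.ncard_univ, Nat.card_eq_fintype_card] at h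
      have hsym : Fintype.card (Sym2 V) = (n + 1).choose 2 := by
        rw [Sym2.card, hn]
      have : (n + 1).choose 2 ≤ n * n := by
        rw [Nat.choose_two_right]
        have h2 : (n + 1) * n ≤ 2 * (n * n) := by nlinarith
        calc (n + 1) * n / 2 ≤ 2 * (n * n) / 2 := Nat.div_le_div_right h2
          _ = n * n := Nat.mul_div_cancel_left _ (by norm_num)
      omega
    have := glow N le_rfl
    have : g N ≤ n * n + n := by simp only [hg]; omega
    omega
def near {m : ℕ} (x₀ v : Fin m × Fin m) : Prop :=
  x₀.1.val ≤ v.1.val + 1 ∧ v.1.val ≤ x₀.1.val + 1 ∧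
  x₀.2.val ≤ v.2.val + 1 ∧ v.2.val ≤ x₀.2.val + 1
lemma short_path_near {m : ℕ} {x₀ a b : Fin m × Fin m}
    (p : (latticeGraph m).Walk a b) (hp : p.IsPath) (hl : p.length ≤ 2)
    (hna : near x₀ a) (hnb : near x₀ b) : ∀ v ∈ p.support, near x₀ v := by
  cases p with
  | nil => intro v hv; simp at hv; subst hv; exact hna
  | @cons _ w _ h q =>
    cases q with
    | nil =>
      intro v hv
      simp [SimpleGraph.Walk.support_cons] at hv
      rcases hv with rfl | rfl
      · exact hna
      · exact hnb
    | @cons _ w' _ h' r =>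
      cases r with
      | nil =>
        intro v hv
        simp [SimpleGraph.Walk.support_cons] at hv
        have hab : a ≠ b := by
          have := hp.support_nodup
          simp [SimpleGraph.Walk.support_cons] at this
          tauto
        rcases hv with rfl | rfl | rfl
        · exact hna
        · -- middle vertex
          rw [lat_adj] at h h'
          have hab' : a.1.val ≠ b.1.val ∨ a.2.val ≠ b.2.val := by
            by_contra hc
            push_neg at hc
            exact hab (Prod.ext (Fin.ext hc.1) (Fin.ext hc.2))
          unfold near at *
          omega
        · exact hnb
      | cons h'' r' => simp [SimpleGraph.Walk.length_cons] at hl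
lemma wAdd_near {m : ℕ} {x₀ : Fin m × Fin m} {s : ℕ} (hs : s ≤ 2)
    {P : Set (Fin m × Fin m) × Set (Sym2 (Fin m × Fin m))}
    (hP : ∀ v ∈ P.1, near x₀ v) :
    ∀ v ∈ (wAdd (latticeGraph m) s P).1, near x₀ v := by
  intro v hv
  rcases hv with hv | ⟨a, ha, b, hb, p, hp, hl, _, hv⟩
  · exact hP v hv
  · exact short_path_near p hp (by omega) (hP a ha.1) (hP b hb.1) v hv
lemma wSat_near {m : ℕ} {x₀ : Fin m × Fin m} {s : ℕ} (hs : s ≤ 2)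
    {P : Set (Fin m × Fin m) × Set (Sym2 (Fin m × Fin m))}
    (hP : ∀ v ∈ P.1, near x₀ v) :
    ∀ v ∈ (wSat (latticeGraph m) s P).1, near x₀ v := by
  unfold wSat
  generalize (Fintype.card (Fin m × Fin m) * Fintype.card (Fin m × Fin m) +
    Fintype.card (Fin m × Fin m) + 1) = k
  induction k with
  | zero => exact hP
  | succ k ih =>
    rw [Function.iterate_succ_apply']
    exact wAdd_near hs ih
lemma wzpz_near {m : ℕ} {x₀ : Fin m × Fin m} {ℓ : ℕ} (hℓ : ℓ ≤ 2) :
    ∀ v ∈ (wzpz (latticeGraph m) x₀ ℓ).1, near x₀ v := by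
  have base : ∀ v ∈ (wzpz (latticeGraph m) x₀ 0).1, near x₀ v := by
    intro v hv
    rcases hv with hv | hv
    · simp only [Set.mem_singleton_iff] at hv; subst hv; unfold near; omega
    · have := man_adj ((SimpleGraph.mem_neighborSet _ _ _).mp hv)
      unfold man at this; unfold near; omega
  interval_cases ℓ
  · exact base
  · exact wSat_near (s := 1) (by omega) base
  · exact wSat_near (s := 2) (by omega) (wSat_near (s := 1) (by omega) base)
lemma mem_kcn_path4 {V : Type} (G : SimpleGraph V) (x₀ n1 v1 v2 v3 n2 : V)
    (hn1 : G.Adj x₀ n1) (hn2 : G.Adj x₀ n2)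
    (h1 : G.Adj n1 v1) (h2 : G.Adj v1 v2) (h3 : G.Adj v2 v3) (h4 : G.Adj v3 n2)
    (hnd : [n1, v1, v2, v3, n2].Nodup) :
    v1 ∈ kcnVerts G 6 x₀ ∧ v2 ∈ kcnVerts G 6 x₀ := by
  have hne : n1 ≠ n2 := by
    simp only [List.nodup_cons, List.mem_cons] at hnd
    tauto
  set p : G.Walk n1 n2 :=
    SimpleGraph.Walk.cons h1 (SimpleGraph.Walk.cons h2
      (SimpleGraph.Walk.cons h3 (SimpleGraph.Walk.cons h4 SimpleGraph.Walk.nil))) with hp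
  have hsup : p.support = [n1, v1, v2, v3, n2] := by
    simp [hp, SimpleGraph.Walk.support_cons]
  have hpath : p.IsPath := by
    rw [SimpleGraph.Walk.isPath_def, hsup]; exact hnd
  have hlen : p.length ≤ 6 - 2 := by simp [hp]
  constructor
  · exact Or.inr ⟨n1, n2, hn1, hn2, hne, p, hpath, hlen, by rw [hsup]; simp⟩
  · exact Or.inr ⟨n1, n2, hn1, hn2, hne, p, hpath, hlen, by rw [hsup]; simp⟩
lemma lat_adj' {m : ℕ} {a b c d : ℕ} (ha : a < m) (hb : b < m) (hc : c < m) (hd : d < m)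
    (h : (a = c ∧ (b + 1 = d ∨ d + 1 = b)) ∨ (b = d ∧ (a + 1 = c ∨ c + 1 = a))) :
    (latticeGraph m).Adj (⟨a, ha⟩, ⟨b, hb⟩) (⟨c, hc⟩, ⟨d, hd⟩) := by
  rw [lat_adj]; exact h

/-- In an `m × m` lattice with `m ≥ 4`, for any interior vertex `x₀` the KCN
6-neighborhood `N^K_6(x₀)` does not coincide with any WZPZ-neighborhood `N^W_ℓ(x₀)`. -/
theorem stmt_17 (m : ℕ) (hm : 4 ≤ m) (x₀ : Fin m × Fin m)
    (hx1 : 0 < x₀.1.val) (hx1' : x₀.1.val < m - 1)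
    (hx2 : 0 < x₀.2.val) (hx2' : x₀.2.val < m - 1) (ℓ : ℕ) :
    ¬ (kcnVerts (latticeGraph m) 6 x₀ = (wzpz (latticeGraph m) x₀ ℓ).1 ∧
        kcnEdges (latticeGraph m) 6 x₀ = (wzpz (latticeGraph m) x₀ ℓ).2) := by
  obtain ⟨⟨x, hxm⟩, ⟨y, hym⟩⟩ := x₀
  dsimp only at hx1 hx1' hx2 hx2'
  rintro ⟨hKV, hKE⟩
  -- choose directions with room 2
  obtain ⟨x1, x2, hx2m, hxc⟩ : ∃ x1 x2, x2 < m ∧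
      ((x1 = x + 1 ∧ x2 = x + 2) ∨ (x1 + 1 = x ∧ x2 + 2 = x)) := by
    by_cases h : x + 2 < m
    · exact ⟨x + 1, x + 2, h, Or.inl ⟨rfl, rfl⟩⟩
    · exact ⟨x - 1, x - 2, by omega, Or.inr ⟨by omega, by omega⟩⟩
  obtain ⟨y1, y2, hy2m, hyc⟩ : ∃ y1 y2, y2 < m ∧
      ((y1 = y + 1 ∧ y2 = y + 2) ∨ (y1 + 1 = y ∧ y2 + 2 = y)) := by
    by_cases h : y + 2 < m
    · exact ⟨y + 1, y + 2, h, Or.inl ⟨rfl, rfl⟩⟩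
    · exact ⟨y - 1, y - 2, by omega, Or.inr ⟨by omega, by omega⟩⟩
  have hx1m : x1 < m := by omega
  have hy1m : y1 < m := by omega
  set x₀ : Fin m × Fin m := (⟨x, hxm⟩, ⟨y, hym⟩) with hx₀
  -- the key kcn memberships via explicit length-4 paths
  have hmemA : ((⟨x2, hx2m⟩, ⟨y, hym⟩) : Fin m × Fin m) ∈ kcnVerts (latticeGraph m) 6 x₀ ∧
      ((⟨x2, hx2m⟩, ⟨y1, hy1m⟩) : Fin m × Fin m) ∈ kcnVerts (latticeGraph m) 6 x₀ := by
    refine mem_kcn_path4 (latticeGraph m) x₀ (⟨x1, hx1m⟩, ⟨y, hym⟩) (⟨x2, hx2m⟩, ⟨y, hym⟩)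
      (⟨x2, hx2m⟩, ⟨y1, hy1m⟩) (⟨x1, hx1m⟩, ⟨y1, hy1m⟩) (⟨x, hxm⟩, ⟨y1, hy1m⟩)
      (lat_adj' _ _ _ _ (by omega)) (lat_adj' _ _ _ _ (by omega))
      (lat_adj' _ _ _ _ (by omega)) (lat_adj' _ _ _ _ (by omega))
      (lat_adj' _ _ _ _ (by omega)) (lat_adj' _ _ _ _ (by omega)) ?_
    simp only [List.nodup_cons, List.mem_cons, List.mem_singleton, List.not_mem_nil,
      List.nodup_nil, Prod.mk.injEq, Fin.mk.injEq, not_or, and_true, not_false_iff]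
    omega
  rcases le_or_gt ℓ 2 with hℓ | hℓ
  · -- small ℓ : wzpz stays in the 3 × 3 block, but (x2, y) is in kcnVerts
    have hw := hmemA.1
    rw [hKV] at hw
    have := wzpz_near hℓ _ hw
    unfold near at this
    simp only [hx₀] at this
    omega
  · -- large ℓ : K is a fixed point of wAdd, but the corner path adds (x2, y2)
    have hmemB : ((⟨x1, hx1m⟩, ⟨y2, hy2m⟩) : Fin m × Fin m) ∈ kcnVerts (latticeGraph m) 6 x₀ := by
      refine (mem_kcn_path4 (latticeGraph m) x₀ (⟨x, hxm⟩, ⟨y1, hy1m⟩) (⟨x, hxm⟩, ⟨y2, hy2m⟩)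
        (⟨x1, hx1m⟩, ⟨y2, hy2m⟩) (⟨x1, hx1m⟩, ⟨y1, hy1m⟩) (⟨x1, hx1m⟩, ⟨y, hym⟩)
        (lat_adj' _ _ _ _ (by omega)) (lat_adj' _ _ _ _ (by omega))
        (lat_adj' _ _ _ _ (by omega)) (lat_adj' _ _ _ _ (by omega))
        (lat_adj' _ _ _ _ (by omega)) (lat_adj' _ _ _ _ (by omega)) ?_).2
      simp only [List.nodup_cons, List.mem_cons, List.mem_singleton, List.not_mem_nil,
        List.nodup_nil, Prod.mk.injEq, Fin.mk.injEq, not_or, and_true, not_false_iff]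
      omega
    set K : Set (Fin m × Fin m) × Set (Sym2 (Fin m × Fin m)) :=
      (kcnVerts (latticeGraph m) 6 x₀, kcnEdges (latticeGraph m) 6 x₀) with hKdef
    obtain ⟨s, rfl⟩ : ∃ s, ℓ = s + 1 := ⟨ℓ - 1, by omega⟩
    have hK : K = wzpz (latticeGraph m) x₀ (s + 1) := Prod.ext hKV hKE
    have hfix : wAdd (latticeGraph m) (s + 1) K = K := by
      rw [hK]
      exact wSat_fixed (latticeGraph m) (s + 1) (wzpz (latticeGraph m) x₀ s)
    set a : Fin m × Fin m := (⟨x2, hx2m⟩, ⟨y1, hy1m⟩) with hadef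
    set b : Fin m × Fin m := (⟨x1, hx1m⟩, ⟨y2, hy2m⟩) with hbdef
    set c : Fin m × Fin m := (⟨x2, hx2m⟩, ⟨y2, hy2m⟩) with hcdef
    have hac : (latticeGraph m).Adj a c := lat_adj' _ _ _ _ (by omega)
    have hcb : (latticeGraph m).Adj c b := lat_adj' _ _ _ _ (by omega)
    have hcfar : ¬ (man x₀ c ≤ 3) := by unfold man; simp only [hx₀, hcdef]; omega
    have heac : s(a, c) ∉ K.2 := fun h => hcfar (kcn_edge_bound h)
    have hecb : s(c, b) ∉ K.2 := by
      rw [Sym2.eq_swap]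
      exact fun h => hcfar (kcn_edge_bound h)
    have hbda : a ∈ wBdry (latticeGraph m) K := ⟨hmemA.2, c, hac, heac⟩
    have hbdb : b ∈ wBdry (latticeGraph m) K := ⟨hmemB, c, hcb.symm, by rwa [Sym2.eq_swap]⟩
    -- the length-2 path a - c - b
    set p : (latticeGraph m).Walk a b :=
      SimpleGraph.Walk.cons hac (SimpleGraph.Walk.cons hcb SimpleGraph.Walk.nil) with hpdef
    have hsup : p.support = [a, c, b] := by simp [hpdef]
    have hpath : p.IsPath := by
      rw [SimpleGraph.Walk.isPath_def, hsup]
      simp only [List.nodup_cons, List.mem_cons, List.mem_singleton, List.not_mem_nil,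
        List.nodup_nil, hadef, hbdef, hcdef, Prod.mk.injEq, Fin.mk.injEq, not_or, and_true,
        not_false_iff]
      omega
    have hedges : ∀ e ∈ p.edges, e ∉ K.2 := by
      intro e he
      simp only [hpdef, SimpleGraph.Walk.edges_cons, SimpleGraph.Walk.edges_nil,
        List.mem_cons, List.not_mem_nil, or_false] at he
      rcases he with rfl | rfl
      · exact heac
      · exact hecb
    have hcmem : c ∈ (wAdd (latticeGraph m) (s + 1) K).1 :=
      Or.inr ⟨a, hbda, b, hbdb, p, hpath, by simp [hpdef]; omega, hedges, by rw [hsup]; simp⟩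
    rw [hfix] at hcmem
    exact hcfar (kcn_vert_bound hcmem)
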